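/- arXiv:1307.2569 — 3 statements merged into one kernel-verified Lean document; each statement's English description precedes it below -/
import Mathlib

section
/- Proportional allocation is feasible: fix a link l with capacity c^l > 0, groups k ∈ K^l, positive weights α_{ki}^l > 0, and nonnegative demands y_{ki} ≥ 0. Define n_k^l = max_{i ∈ G_k^l} α_{ki}^l y_{ki}, let r^l = c^l / Σ_{k∈K^l} n_k^l when at least two groups have positive n_k^l, r^l = c^l/Σ n_k^l - c^l/(n_k^l(n_k^l+1)) when exactly one group k has n_k^l > 0, and r^l = +∞ otherwise; set r = min over links of r^l, x_{ki} = r·y_{ki}, m_k^l = r·n_k^l. Then for every link l: Σ_{k∈K^l} m_k^l ≤ c^l and α_{ki}^l x_{ki} ≤ m_k^l for all i ∈ G_k^l. -/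
open scoped ENNReal

/-! Whenever some group is active on link `l`, the link's rate is at most `c^l / Σₖ n_k^l`
(the single-group correction only lowers it), hence so is `r`, and `Σₖ m_k^l = r Σₖ n_k^l ≤ c^l`
because `(a / b) * b ≤ a` holds in `ℝ≥0∞` for all `a, b`.
The group constraint holds because `m_k^l` scales the group maximum `n_k^l` by the same factor `r`
as `x_{ki}` scales `y_{ki}`. -/

theorem Finset.filter_pos_nonempty_of_sum_ne_zero {ι M : Type*} [AddCommMonoid M] [PartialOrder M]
    [CanonicallyOrderedAdd M] {s : Finset ι} {f : ι → M} [DecidablePred fun i => 0 < f i]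
    (h : ∑ i ∈ s, f i ≠ 0) : (s.filter fun i => 0 < f i).Nonempty := by
  obtain ⟨i, hi, hfi⟩ := Finset.exists_ne_zero_of_sum_ne_zero h
  exact ⟨i, Finset.mem_filter.2 ⟨hi, pos_iff_ne_zero.2 hfi⟩⟩

theorem proportionalRate_le_div {s : ℕ} (hs : s ≠ 0) (c T : ℝ≥0∞) :
    (if 2 ≤ s then c / T else if s = 1 then c / T - c / (T * (T + 1)) else ⊤) ≤ c / T := by
  split_ifs
  · exact le_rfl
  · exact tsub_le_self
  · omega

theorem stmt4_general (L K N : Type) [Fintype K] [Fintype N] [DecidableEq K]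
    (grp : N → K) (uses : N → L → Prop) [∀ i l, Decidable (uses i l)]
    (α : N → L → ℝ≥0∞)
    (y : N → ℝ≥0∞)
    (c : L → ℝ≥0∞)
    (n : K → L → ℝ≥0∞)
    (hn : ∀ k l, n k l =
      (Finset.univ.filter (fun i : N => grp i = k ∧ uses i l)).sup
        (fun i => α i l * y i))
    (S : L → Finset K)
    (hS : ∀ l, S l = Finset.univ.filter (fun k : K => 0 < n k l))
    (rl : L → ℝ≥0∞)
    (hrl : ∀ l, rl l =
      if 2 ≤ (S l).card then c l / (∑ k : K, n k l)
      else if (S l).card = 1 then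
        c l / (∑ k : K, n k l)
          - c l / ((∑ k : K, n k l) * ((∑ k : K, n k l) + 1))
      else ⊤)
    (r : ℝ≥0∞) (hr : r = ⨅ l : L, rl l)
    (x : N → ℝ≥0∞) (hx : ∀ i, x i = r * y i)
    (m : K → L → ℝ≥0∞) (hm : ∀ k l, m k l = r * n k l) :
    (∀ l : L, ∑ k : K, m k l ≤ c l) ∧
    (∀ (i : N) (l : L), uses i l → α i l * x i ≤ m (grp i) l) := by
  refine ⟨fun l => ?_, fun i l hil => ?_⟩
  · have hsum : ∑ k, m k l = r * ∑ k, n k l := by simp only [hm, Finset.mul_sum]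
    rcases eq_or_ne (∑ k, n k l) 0 with hT | hT
    · simp [hsum, hT]
    have hS_ne : (S l).card ≠ 0 := by
      rw [hS]
      exact (Finset.filter_pos_nonempty_of_sum_ne_zero hT).card_pos.ne'
    have hr_le : r ≤ c l / ∑ k, n k l :=
      hr ▸ (iInf_le rl l).trans (hrl l ▸ proportionalRate_le_div hS_ne _ _)
    exact hsum ▸ ENNReal.mul_le_of_le_div hr_le
  · have hle : α i l * y i ≤ n (grp i) l :=
      hn _ _ ▸ Finset.le_sup (f := fun j => α j l * y j) (by simp [hil])
    rw [hx, hm, mul_left_comm]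
    exact mul_le_mul_right hle r

/-- Feasibility of the (modified) proportional allocation rule: given nonnegative
demands `y`, positive weights `α` and capacities `c`, with `n k l` the weighted group
maximum, `r^l = c^l/Σₖ n_k^l` when at least two groups have a positive maximum at `l`,
`r^l = c^l/Σₖ n_k^l - c^l/(Σₖ n_k^l·(Σₖ n_k^l + 1))` when exactly one group does
(so that `Σₖ n_k^l` is that group's maximum), and `r^l = ∞` otherwise, and with
`r = minₗ r^l`, `x_{ki} = r·y_{ki}`, `m_k^l = r·n_k^l`, the allocation satisfies
`Σₖ m_k^l ≤ c^l` and `α_{ki}^l x_{ki} ≤ m_k^l` for every link `l`. -/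
theorem stmt4 (L K N : Type) [Fintype L] [Fintype K] [Fintype N] [DecidableEq K]
    (grp : N → K) (uses : N → L → Prop) [∀ i l, Decidable (uses i l)]
    (α : N → L → ℝ≥0∞) (hα : ∀ i l, 0 < α i l ∧ α i l ≠ ⊤)
    (y : N → ℝ≥0∞) (hy : ∀ i, y i ≠ ⊤)
    (c : L → ℝ≥0∞) (hc : ∀ l, 0 < c l ∧ c l ≠ ⊤)
    (n : K → L → ℝ≥0∞)
    (hn : ∀ k l, n k l =
      (Finset.univ.filter (fun i : N => grp i = k ∧ uses i l)).sup
        (fun i => α i l * y i))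
    (S : L → Finset K)
    (hS : ∀ l, S l = Finset.univ.filter (fun k : K => 0 < n k l))
    (rl : L → ℝ≥0∞)
    (hrl : ∀ l, rl l =
      if 2 ≤ (S l).card then c l / (∑ k : K, n k l)
      else if (S l).card = 1 then
        c l / (∑ k : K, n k l)
          - c l / ((∑ k : K, n k l) * ((∑ k : K, n k l) + 1))
      else ⊤)
    (r : ℝ≥0∞) (hr : r = ⨅ l : L, rl l)
    (x : N → ℝ≥0∞) (hx : ∀ i, x i = r * y i)
    (m : K → L → ℝ≥0∞) (hm : ∀ k l, m k l = r * n k l) :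
    (∀ l : L, ∑ k : K, m k l ≤ c l) ∧
    (∀ (i : N) (l : L), uses i l → α i l * x i ≤ m (grp i) l) :=
  stmt4_general L K N grp uses α y c n hn S hS rl hrl r hr x hx m hm
end

section
/- Strong budget balance at equilibrium: suppose at equilibrium t_{ki} = x_{ki}·Σ_{l∈L_{ki}} α_{ki}^l p_{ki}^l - Σ_{l∈L_{ki}} (1/(N^l - 1))·Σ_{k'j ∈ N^l∖{ki}} α_{k'j}^l p_{k'j}^l x_{k'j}, where N^l ≥ 2 is the number of agents using link l and L_{ki} the links of agent ki. Then Σ_{ki} t_{ki} = 0. -/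
/-! Summing the taxes link by link, the payments on a link `l` total `P_l = Σ_{j uses l} α_j^l p_j^l x_j`,
while each of the `N^l` agents on `l` is rebated `1/(N^l - 1)` times the payments of the other
`N^l - 1` agents; every payment is thus counted `N^l - 1` times among the rebates, which
therefore also total `P_l`. -/

open Finset

namespace Finset

theorem sum_sum_erase_eq_card_sub_one_mul {ι R : Type*} [DecidableEq ι] [CommRing R]
    (s : Finset ι) (f : ι → R) :
    ∑ i ∈ s, ∑ j ∈ s.erase i, f j = ((#s : R) - 1) * ∑ j ∈ s, f j := by
  have h_erase : ∀ i ∈ s, ∑ j ∈ s.erase i, f j = ∑ j ∈ s, f j - f i :=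
    fun _ hi => sum_erase_eq_sub hi
  rw [sum_congr rfl h_erase, sum_sub_distrib, sum_const, nsmul_eq_mul]
  ring

theorem sum_inv_card_sub_one_mul_sum_erase {ι K : Type*} [DecidableEq ι] [Field K] [CharZero K]
    (s : Finset ι) (hs : #s ≠ 1) (f : ι → K) :
    ∑ i ∈ s, 1 / ((#s : K) - 1) * ∑ j ∈ s.erase i, f j = ∑ j ∈ s, f j := by
  have hcard : (#s : K) - 1 ≠ 0 := by
    rw [sub_ne_zero]
    exact_mod_cast hs
  rw [← mul_sum, sum_sum_erase_eq_card_sub_one_mul, ← mul_assoc, one_div,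
    inv_mul_cancel₀ hcard, one_mul]

end Finset

/-- Strong budget balance at equilibrium: if at equilibrium each agent's tax is their
payment `x_{ki}·Σ_{l∈L_{ki}} α_{ki}^l p_{ki}^l` minus, per link, the average payment
`(1/(N^l-1))·Σ_{k'j ≠ ki} α_{k'j}^l p_{k'j}^l x_{k'j}` of the other agents on that link
(with `N^l ≥ 2` agents on every link), then the taxes sum to zero. -/
theorem stmt14 (L N : Type) [Fintype L] [Fintype N] [DecidableEq N]
    (uses : N → L → Prop) [∀ i l, Decidable (uses i l)]
    (α p : N → L → ℝ) (x : N → ℝ)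
    (hN2 : ∀ l : L, 2 ≤ (Finset.univ.filter (fun j : N => uses j l)).card)
    (t : N → ℝ)
    (ht : ∀ i : N, t i =
      x i * (∑ l ∈ Finset.univ.filter (fun l : L => uses i l), α i l * p i l) -
      ∑ l ∈ Finset.univ.filter (fun l : L => uses i l),
        (1 / ((Finset.univ.filter (fun j : N => uses j l)).card - 1 : ℝ)) *
          ∑ j ∈ (Finset.univ.filter (fun j : N => uses j l)).erase i,
            α j l * p j l * x j) :
    ∑ i : N, t i = 0 := by
  have sum_by_link : ∀ f : N → L → ℝ,
      ∑ i, ∑ l ∈ univ.filter (uses i ·), f i l = ∑ l, ∑ i ∈ univ.filter (uses · l), f i l :=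
    fun f => sum_comm' (by simp)
  have payment_by_link : ∀ i, x i * ∑ l ∈ univ.filter (uses i ·), α i l * p i l =
      ∑ l ∈ univ.filter (uses i ·), x i * (α i l * p i l) := fun i => mul_sum _ _ _
  simp only [ht, sum_sub_distrib, payment_by_link, sum_by_link, sub_eq_zero]
  refine sum_congr rfl fun l _ => ?_
  rw [sum_inv_card_sub_one_mul_sum_erase _ (by have := hN2 l; omega)]
  exact sum_congr rfl fun i _ => by ring
end

section
/- Counter-example to the earlier mechanism's equilibrium claim: let v : ℝ≥0 → ℝ be continuous, p > 0, and suppose an agent at demand x₀ > 0 has utility u(x) = v(x) - p·x for x ≥ x₀ and u(x) = v(x) for x < x₀ (tax drops discontinuously to 0 below x₀). Then x₀ is not a maximizer of u: for ε > 0 small enough, u(x₀ - ε) = v(x₀ - ε) > v(x₀) - p·x₀ = u(x₀). -/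
/-!
Near `x₀` the untaxed value `v` stays above `v x₀ - p * x₀`, a strict margin because `p * x₀ > 0`.
Demanding slightly less than `x₀` drops the whole tax `p * x₀` while changing `v` arbitrarily little,
so every small enough downward deviation is strictly profitable.
-/

theorem ContinuousAt.exists_forall_lt_apply_sub {v : ℝ → ℝ} {x₀ c : ℝ} (hv : ContinuousAt v x₀)
    (hc : c < v x₀) : ∃ ε₀ > 0, ∀ ε : ℝ, 0 < ε → ε < ε₀ → c < v (x₀ - ε) := by
  obtain ⟨δ, hδ, hball⟩ := Metric.eventually_nhds_iff.mp (hv.eventually (lt_mem_nhds hc))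
  refine ⟨δ, hδ, fun ε hε hεδ => hball ?_⟩
  rwa [Real.dist_eq, sub_sub_cancel_left, abs_neg, abs_of_pos hε]

/-- Counter-example to the earlier mechanism's equilibrium claim: if the utility is
`u(x) = v(x) - p·x` for `x ≥ x₀` and `u(x) = v(x)` for `x < x₀` (the tax drops
discontinuously to `0` below `x₀`), with `v` continuous at `x₀`, `p > 0`, `x₀ > 0`,
then `x₀` is not a maximizer of `u` on `[0, ∞)`: for all small enough `ε > 0`,
`u(x₀ - ε) > u(x₀)`. -/
theorem stmt18 (v : ℝ → ℝ) (p x₀ : ℝ) (hv : ContinuousAt v x₀)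
    (hp : 0 < p) (hx₀ : 0 < x₀)
    (u : ℝ → ℝ) (hu : ∀ x, u x = if x₀ ≤ x then v x - p * x else v x) :
    (¬ ∀ x, 0 ≤ x → u x ≤ u x₀) ∧
    ∃ ε₀ > 0, ∀ ε : ℝ, 0 < ε → ε < ε₀ → u x₀ < u (x₀ - ε) := by
  have htax : v x₀ - p * x₀ < v x₀ := sub_lt_self _ (mul_pos hp hx₀)
  obtain ⟨ε₀, hε₀, hv_near⟩ := hv.exists_forall_lt_apply_sub htax
  have hprofit : ∀ ε : ℝ, 0 < ε → ε < ε₀ → u x₀ < u (x₀ - ε) := by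
    intro ε hε hεε₀
    rw [hu, hu, if_pos le_rfl, if_neg (by linarith)]
    exact hv_near ε hε hεε₀
  refine ⟨fun hmax => ?_, ε₀, hε₀, hprofit⟩
  set ε := min ε₀ x₀ / 2
  have hε : 0 < ε := half_pos (lt_min hε₀ hx₀)
  have hεε₀ : ε < ε₀ := (half_lt_self (lt_min hε₀ hx₀)).trans_le (min_le_left _ _)
  have hεx₀ : ε < x₀ := (half_lt_self (lt_min hε₀ hx₀)).trans_le (min_le_right _ _)
  exact (hprofit ε hε hεε₀).not_ge (hmax _ (by linarith))
end
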